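/- arXiv:1302.6868 — 7 statements merged into one kernel-verified Lean document; each statement's English description precedes it below -/
import Mathlib

section
/- Let Ω ⊆ ℝ^n be a Lebesgue-measurable set, G : Ω × Ω → ℝ a nonnegative measurable function, ρ : Ω → ℝ a nonnegative measurable function, λ > 0, and let p ∈ (1, ∞) with conjugate exponent q = p/(p−1). Suppose u : Ω → ℝ is measurable, u(x) > 0 for almost every x ∈ Ω, 0 < ∫_Ω ρ(x)^q u(x)^q dx < ∞, and u(x) = λ ∫_Ω G(x,ξ) ρ(ξ) u(ξ) dξ for almost every x ∈ Ω. Then λ^q · ∫_Ω ρ(x)^q ( ∫_Ω G(x,ξ)^p dξ )^{q/p} dx ≥ 1, where the iterated integral is taken in [0,∞]. Equivalently, λ ≥ ( ∫_Ω ρ(x)^q ( ∫_Ω G(x,ξ)^p dξ )^{q/p} dx )^{-1/q}. -/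
open MeasureTheory

open scoped ENNReal

/-!
Put `I = ∫ ρ^q u^q`. Hölder's inequality in `ξ`, applied to the eigenfunction equation, gives
`u(x)^q ≤ λ^q (∫ G(x,ξ)^p dξ)^{q/p} I` for almost every `x`. Multiplying by `ρ(x)^q` and
integrating yields `I ≤ λ^q (∫ ρ^q (∫ G^p)^{q/p}) I`, and `0 < I < ∞` lets one cancel `I`.
-/

section

variable {α : Type*} [MeasurableSpace α] {μ : Measure α}

theorem ofReal_integral_le_lintegral_ofReal (f : α → ℝ) :
    ENNReal.ofReal (∫ x, f x ∂μ) ≤ ∫⁻ x, ENNReal.ofReal (f x) ∂μ := by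
  by_cases hf : Integrable f μ
  · rw [integral_eq_lintegral_pos_part_sub_lintegral_neg_part hf]
    exact (ENNReal.ofReal_le_ofReal (sub_le_self _ ENNReal.toReal_nonneg)).trans
      ENNReal.ofReal_toReal_le
  · simp [integral_undef hf]

theorem ENNReal.lintegral_mul_rpow_le_of_holderConjugate {p q : ℝ} (hpq : p.HolderConjugate q)
    {f g : α → ℝ≥0∞} (hf : AEMeasurable f μ) (hg : AEMeasurable g μ) :
    (∫⁻ x, f x * g x ∂μ) ^ q ≤ (∫⁻ x, f x ^ p ∂μ) ^ (q / p) * ∫⁻ x, g x ^ q ∂μ := by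
  have hq : 0 < q := hpq.symm.pos
  calc (∫⁻ x, f x * g x ∂μ) ^ q
      ≤ ((∫⁻ x, f x ^ p ∂μ) ^ (1 / p) * (∫⁻ x, g x ^ q ∂μ) ^ (1 / q)) ^ q :=
        ENNReal.rpow_le_rpow (ENNReal.lintegral_mul_le_Lp_mul_Lq μ hpq hf hg) hq.le
    _ = (∫⁻ x, f x ^ p ∂μ) ^ (q / p) * ∫⁻ x, g x ^ q ∂μ := by
        rw [ENNReal.mul_rpow_of_nonneg _ _ hq.le, ← ENNReal.rpow_mul, ← ENNReal.rpow_mul,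
          one_div_mul_cancel hq.ne', ENNReal.rpow_one, one_div_mul_eq_div]

theorem one_le_rpow_mul_lintegral_of_ae_le_mul_lintegral_kernel {p q : ℝ}
    (hpq : p.HolderConjugate q) {K : α → α → ℝ≥0∞} {r v : α → ℝ≥0∞} {c : ℝ≥0∞}
    (hK : ∀ x, AEMeasurable (K x) μ) (hrv : AEMeasurable (fun x => r x * v x) μ)
    (hc : c ≠ ⊤) (hI₀ : ∫⁻ x, (r x * v x) ^ q ∂μ ≠ 0) (hI : ∫⁻ x, (r x * v x) ^ q ∂μ ≠ ⊤)
    (hv : ∀ᵐ x ∂μ, v x ≤ c * ∫⁻ ξ, K x ξ * (r ξ * v ξ) ∂μ) :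
    1 ≤ c ^ q * ∫⁻ x, r x ^ q * (∫⁻ ξ, K x ξ ^ p ∂μ) ^ (q / p) ∂μ := by
  have hq : 0 ≤ q := hpq.symm.nonneg
  set I := ∫⁻ x, (r x * v x) ^ q ∂μ
  have hpointwise : ∀ᵐ x ∂μ,
      (r x * v x) ^ q ≤ c ^ q * (r x ^ q * (∫⁻ ξ, K x ξ ^ p ∂μ) ^ (q / p)) * I := by
    filter_upwards [hv] with x hvx
    calc (r x * v x) ^ q
        ≤ r x ^ q * (c ^ q * (∫⁻ ξ, K x ξ * (r ξ * v ξ) ∂μ) ^ q) := by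
          rw [ENNReal.mul_rpow_of_nonneg _ _ hq, ← ENNReal.mul_rpow_of_nonneg c _ hq]
          gcongr
      _ ≤ r x ^ q * (c ^ q * ((∫⁻ ξ, K x ξ ^ p ∂μ) ^ (q / p) * I)) := by
          gcongr
          exact ENNReal.lintegral_mul_rpow_le_of_holderConjugate hpq (hK x) hrv
      _ = _ := by ring
  have hcq : c ^ q ≠ ⊤ := ENNReal.rpow_ne_top_of_nonneg hq hc
  refine (ENNReal.mul_le_mul_iff_left hI₀ hI).mp ?_
  calc 1 * I ≤ ∫⁻ x, c ^ q * (r x ^ q * (∫⁻ ξ, K x ξ ^ p ∂μ) ^ (q / p)) * I ∂μ := by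
        rw [one_mul]; exact lintegral_mono_ae hpointwise
    _ = _ := by rw [lintegral_mul_const' _ _ hI, lintegral_const_mul' _ _ hcq]

end

/-- Hölder-inequality lower bound for the eigenvalue of a weighted
integral-operator eigenfunction equation. -/
theorem eigenvalue_lower_bound_holder
    {n : ℕ} (Ω : Set (EuclideanSpace ℝ (Fin n))) (hΩ : MeasurableSet Ω)
    (G : EuclideanSpace ℝ (Fin n) → EuclideanSpace ℝ (Fin n) → ℝ)
    (hGmeas : Measurable (Function.uncurry G))
    (hGnonneg : ∀ x ∈ Ω, ∀ ξ ∈ Ω, 0 ≤ G x ξ)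
    (ρ : EuclideanSpace ℝ (Fin n) → ℝ)
    (hρmeas : Measurable ρ) (hρnonneg : ∀ x ∈ Ω, 0 ≤ ρ x)
    (lam : ℝ) (hlam : 0 < lam)
    (p q : ℝ) (hp : 1 < p) (hq : q = p / (p - 1))
    (u : EuclideanSpace ℝ (Fin n) → ℝ) (humeas : Measurable u)
    (hupos : ∀ᵐ x ∂(volume.restrict Ω), 0 < u x)
    (hintpos : 0 < ∫⁻ x in Ω, ENNReal.ofReal (ρ x ^ q * u x ^ q))
    (hintfin : (∫⁻ x in Ω, ENNReal.ofReal (ρ x ^ q * u x ^ q)) < ⊤)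
    (hrep : ∀ᵐ x ∂(volume.restrict Ω),
      u x = lam * ∫ ξ in Ω, G x ξ * ρ ξ * u ξ) :
    1 ≤ ENNReal.ofReal (lam ^ q) *
      ∫⁻ x in Ω, ENNReal.ofReal (ρ x ^ q) *
        (∫⁻ ξ in Ω, ENNReal.ofReal (G x ξ ^ p)) ^ (q / p) := by
  have hpq : p.HolderConjugate q := (Real.holderConjugate_iff_eq_conjExponent hp).2 hq
  have hΩae : ∀ᵐ x ∂(volume.restrict Ω), x ∈ Ω := ae_restrict_mem hΩ
  have hI : ∫⁻ x in Ω, ENNReal.ofReal (ρ x ^ q * u x ^ q) =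
      ∫⁻ x in Ω, (ENNReal.ofReal (ρ x) * ENNReal.ofReal (u x)) ^ q := by
    refine lintegral_congr_ae ?_
    filter_upwards [hΩae, hupos] with x hx hux
    rw [← Real.mul_rpow (hρnonneg x hx) hux.le, ← ENNReal.ofReal_mul (hρnonneg x hx),
      ENNReal.ofReal_rpow_of_nonneg (mul_nonneg (hρnonneg x hx) hux.le) hpq.symm.nonneg]
  have heig : ∀ᵐ x ∂(volume.restrict Ω), ENNReal.ofReal (u x) ≤ ENNReal.ofReal lam *
      ∫⁻ ξ in Ω, ENNReal.ofReal (G x ξ) * (ENNReal.ofReal (ρ ξ) * ENNReal.ofReal (u ξ)) := by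
    filter_upwards [hΩae, hrep] with x hx hrepx
    rw [hrepx, ENNReal.ofReal_mul hlam.le]
    gcongr
    refine (ofReal_integral_le_lintegral_ofReal _).trans_eq (lintegral_congr_ae ?_)
    filter_upwards [hΩae, hupos] with ξ hξ huξ
    rw [mul_assoc, ENNReal.ofReal_mul (hGnonneg x hx ξ hξ), ENNReal.ofReal_mul (hρnonneg ξ hξ)]
  have hbound := one_le_rpow_mul_lintegral_of_ae_le_mul_lintegral_kernel hpq
    (K := fun x ξ => ENNReal.ofReal (G x ξ)) (r := fun x => ENNReal.ofReal (ρ x))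
    (fun x => (ENNReal.measurable_ofReal.comp hGmeas.of_uncurry_left).aemeasurable)
    ((ENNReal.measurable_ofReal.comp hρmeas).mul
      (ENNReal.measurable_ofReal.comp humeas)).aemeasurable
    ENNReal.ofReal_ne_top (hI ▸ hintpos.ne') (hI ▸ hintfin.ne) heig
  rw [← ENNReal.ofReal_rpow_of_nonneg hlam.le hpq.symm.nonneg]
  refine hbound.trans_eq (congrArg _ (setLIntegral_congr_fun hΩ fun x hx => ?_))
  rw [ENNReal.ofReal_rpow_of_nonneg (hρnonneg x hx) hpq.symm.nonneg,
    setLIntegral_congr_fun hΩ fun ξ hξ =>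
      ENNReal.ofReal_rpow_of_nonneg (hGnonneg x hx ξ hξ) hpq.nonneg]
end

section
/- There exists an absolute constant C > 0 such that for every a ≥ 0 and every ε > 0, ∫_0^ε r · (ln(1 + a/r²))² dr ≤ C · ε² · ( 1 + (ln(1 + a/ε²))² ). -/
open MeasureTheory

/-- Radial integral estimate for the squared logarithmic Green's-function
bound in two dimensions. -/
theorem radial_log_integral_bound :
    ∃ C : ℝ, 0 < C ∧ ∀ a : ℝ, 0 ≤ a → ∀ ε : ℝ, 0 < ε →
      (∫ r in Set.Ioo (0:ℝ) ε, r * (Real.log (1 + a / r ^ 2)) ^ 2) ≤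
        C * ε ^ 2 * (1 + (Real.log (1 + a / ε ^ 2)) ^ 2) := by
  refine ⟨32, by norm_num, ?_⟩
  intro a ha ε hε
  set L := Real.log (1 + a / ε ^ 2) with hLdef
  have hL0 : 0 ≤ L := Real.log_nonneg (by
    have : 0 ≤ a / ε ^ 2 := by positivity
    linarith)
  -- pointwise bound
  have key : ∀ r ∈ Set.Ioo (0:ℝ) ε,
      r * (Real.log (1 + a / r ^ 2)) ^ 2 ≤ 2 * L ^ 2 * r + 32 * ε := by
    intro r hr
    obtain ⟨hr0, hrε⟩ := hr
    have hrε' : r ≤ ε := hrε.le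
    have htpos : (1:ℝ) ≤ ε / r := (one_le_div hr0).2 hrε'
    have ht0 : (0:ℝ) < ε / r := by positivity
    -- log (1 + a/r²) ≤ L + 2 log(ε/r)
    have hmono : 1 + a / r ^ 2 ≤ (1 + a / ε ^ 2) * (ε / r) ^ 2 := by
      have h1 : (1:ℝ) ≤ (ε / r) ^ 2 := one_le_pow₀ htpos
      have h2 : a / ε ^ 2 * (ε / r) ^ 2 = a / r ^ 2 := by
        field_simp
      nlinarith
    have hlog1 : Real.log (1 + a / r ^ 2) ≤ L + 2 * Real.log (ε / r) := by
      have hx : (0:ℝ) < 1 + a / r ^ 2 := by positivity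
      have := Real.log_le_log hx hmono
      rwa [Real.log_mul (by positivity) (by positivity), Real.log_pow,
        Nat.cast_ofNat] at this
    have hlogr0 : 0 ≤ Real.log (ε / r) := Real.log_nonneg htpos
    have hy0 : 0 ≤ Real.log (1 + a / r ^ 2) := Real.log_nonneg (by
      have : 0 ≤ a / r ^ 2 := by positivity
      linarith)
    -- log(ε/r)² ≤ 4 (ε/r)
    have hsq : (Real.log (ε / r)) ^ 2 ≤ 4 * (ε / r) := by
      have hs : Real.log (ε / r) = 2 * Real.log (Real.sqrt (ε / r)) := by
        rw [Real.log_sqrt ht0.le]; ring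
      have h1 : Real.log (Real.sqrt (ε / r)) ≤ Real.sqrt (ε / r) - 1 :=
        Real.log_le_sub_one_of_pos (Real.sqrt_pos.2 ht0)
      have h2 : Real.sqrt (ε / r) ^ 2 = ε / r := Real.sq_sqrt ht0.le
      have h3 : 0 ≤ Real.sqrt (ε / r) := Real.sqrt_nonneg _
      nlinarith
    have hsq2 : (Real.log (1 + a / r ^ 2)) ^ 2 ≤ 2 * L ^ 2 + 8 * (Real.log (ε / r)) ^ 2 := by
      nlinarith [sq_nonneg (L - 2 * Real.log (ε / r))]
    have hfin : r * (Real.log (ε / r)) ^ 2 ≤ 4 * ε := by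
      calc r * (Real.log (ε / r)) ^ 2 ≤ r * (4 * (ε / r)) :=
            mul_le_mul_of_nonneg_left hsq hr0.le
        _ = 4 * ε := by field_simp
    nlinarith [mul_le_mul_of_nonneg_left hsq2 hr0.le]
  -- integrability of the dominating function
  have hint : IntegrableOn (fun r : ℝ => 2 * L ^ 2 * r + 32 * ε) (Set.Ioo 0 ε) := by
    rw [← integrableOn_Icc_iff_integrableOn_Ioo]
    exact Continuous.integrableOn_Icc (by continuity)
  have hmono : (∫ r in Set.Ioo (0:ℝ) ε, r * (Real.log (1 + a / r ^ 2)) ^ 2) ≤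
      ∫ r in Set.Ioo (0:ℝ) ε, (2 * L ^ 2 * r + 32 * ε) := by
    refine integral_mono_of_nonneg ?_ hint ?_
    · filter_upwards [ae_restrict_mem measurableSet_Ioo] with r hr
      exact mul_nonneg hr.1.le (sq_nonneg _)
    · filter_upwards [ae_restrict_mem measurableSet_Ioo] with r hr
      exact key r hr
  have hcalc : (∫ r in Set.Ioo (0:ℝ) ε, (2 * L ^ 2 * r + 32 * ε)) =
      L ^ 2 * ε ^ 2 + 32 * ε ^ 2 := by
    have hi1 : IntervalIntegrable (fun x : ℝ => 2 * L ^ 2 * x) volume 0 ε :=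
      Continuous.intervalIntegrable (by continuity) _ _
    rw [← MeasureTheory.integral_Ioc_eq_integral_Ioo,
      ← intervalIntegral.integral_of_le hε.le,
      intervalIntegral.integral_add hi1 intervalIntegrable_const,
      intervalIntegral.integral_const_mul, intervalIntegral.integral_const,
      integral_id]
    simp
    ring
  have hfinal : L ^ 2 * ε ^ 2 + 32 * ε ^ 2 ≤ 32 * ε ^ 2 * (1 + L ^ 2) := by
    nlinarith [sq_nonneg L, sq_nonneg ε]
  calc _ ≤ _ := hmono
    _ = L ^ 2 * ε ^ 2 + 32 * ε ^ 2 := hcalc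
    _ ≤ _ := hfinal
end

section
/- There exists an absolute constant C > 0 with the following property: for every ρ_max > 0, every measurable function ρ : ℝ² → ℝ with 0 ≤ ρ(ξ) ≤ ρ_max for all ξ and ∫_{ℝ²} ρ(ξ) dξ ≤ 1, every a ≥ 0, and every x ∈ ℝ², one has ∫_{ℝ²} ρ(ξ) · ( ln(1 + a/|x−ξ|²) )² dξ ≤ C · ( 1 + (ln(1 + a·ρ_max))² ). -/
/-!
Put ε = ρmax^{-1/2}. Since a/r² = aρmax·(ε/r)², one has
log(1 + a/r²) ≤ log(1 + aρmax) + 2 log⁺(ε/r). Integrated against ρ, which has mass at most 1,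
the square of the constant first term contributes at most itself. The second term lives on the ball of radius ε, and a discrete
layer-cake estimate over the balls of radius e^{-k}ε, whose areas decay geometrically, bounds the
integral of its square by a constant times ε² = 1/ρmax, which absorbs the factor ρmax from ρ ≤ ρmax.
-/

open MeasureTheory Measure Metric Real Module

namespace Real

lemma log_one_add_mul_le {b s : ℝ} (hb : 0 ≤ b) (hs : 0 ≤ s) :
    log (1 + b * s) ≤ log (1 + b) + log⁺ s := by
  rw [posLog_eq_log_max_one hs, ← log_mul (by positivity) (by positivity)]
  gcongr
  nlinarith [le_max_left 1 s, le_max_right 1 s, mul_le_mul_of_nonneg_left (le_max_right 1 s) hb]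

end Real

lemma sum_range_two_mul_add_one (n : ℕ) : ∑ k ∈ Finset.range n, (2 * (k : ℝ) + 1) = n ^ 2 := by
  induction n with
  | zero => simp
  | succ n ih => rw [Finset.sum_range_succ, ih]; push_cast; ring

lemma hasSum_two_mul_add_one_mul_geometric {q : ℝ} (hq₀ : 0 ≤ q) (hq₁ : q < 1) :
    HasSum (fun k : ℕ => (2 * (k : ℝ) + 1) * q ^ k) ((1 + q) / (1 - q) ^ 2) := by
  have hnorm : ‖q‖ < 1 := by rwa [norm_of_nonneg hq₀]
  have hq : 1 - q ≠ 0 := by linarith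
  have hterm : (fun k : ℕ => (2 * (k : ℝ) + 1) * q ^ k) =
      fun k : ℕ => 2 * ((k : ℝ) * q ^ k) + q ^ k := by
    funext k; ring
  have hsum : (1 + q) / (1 - q) ^ 2 = 2 * (q / (1 - q) ^ 2) + (1 - q)⁻¹ := by
    field_simp; ring
  rw [hterm, hsum]
  exact ((hasSum_coe_mul_geometric_of_norm_lt_one hnorm).mul_left 2).add
    (hasSum_geometric_of_lt_one hq₀ hq₁)

lemma ofReal_sq_le_tsum_indicator_Ioi {t : ℝ} (ht : 0 ≤ t) :
    ENNReal.ofReal (t ^ 2) ≤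
      ∑' k : ℕ, (Set.Ioi (k : ℝ)).indicator (fun _ => ENNReal.ofReal (2 * k + 1)) t := by
  set n := ⌈t⌉₊
  calc ENNReal.ofReal (t ^ 2)
      ≤ ENNReal.ofReal (∑ k ∈ Finset.range n, (2 * (k : ℝ) + 1)) := by
        rw [sum_range_two_mul_add_one]
        gcongr
        exact Nat.le_ceil t
    _ = ∑ k ∈ Finset.range n, (Set.Ioi (k : ℝ)).indicator
          (fun _ => ENNReal.ofReal (2 * k + 1)) t := by
        rw [ENNReal.ofReal_sum_of_nonneg fun k _ => by positivity]
        refine Finset.sum_congr rfl fun k hk => ?_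
        rw [Set.indicator_of_mem (s := Set.Ioi (k : ℝ))
          (Nat.lt_ceil.mp (Finset.mem_range.mp hk))]
    _ ≤ _ := ENNReal.sum_le_tsum _

theorem lintegral_ofReal_sq_le_tsum_measure_lt {α : Type*} [MeasurableSpace α] (μ : Measure α)
    {f : α → ℝ} (hf : Measurable f) (hf₀ : 0 ≤ f) :
    ∫⁻ x, ENNReal.ofReal (f x ^ 2) ∂μ ≤
      ∑' k : ℕ, ENNReal.ofReal (2 * k + 1) * μ {x | (k : ℝ) < f x} := by
  have hmeas (k : ℕ) : MeasurableSet {x | (k : ℝ) < f x} := measurableSet_lt measurable_const hf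
  calc ∫⁻ x, ENNReal.ofReal (f x ^ 2) ∂μ
      ≤ ∫⁻ x, ∑' k : ℕ, {x | (k : ℝ) < f x}.indicator
          (fun _ => ENNReal.ofReal (2 * k + 1)) x ∂μ :=
        lintegral_mono fun x => (ofReal_sq_le_tsum_indicator_Ioi (hf₀ x)).trans_eq <|
          tsum_congr fun k => (Set.indicator_comp_right f (s := Set.Ioi (k : ℝ))
            (g := fun _ => ENNReal.ofReal (2 * k + 1))).symm
    _ = ∑' k : ℕ, ENNReal.ofReal (2 * k + 1) * μ {x | (k : ℝ) < f x} := by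
        rw [lintegral_tsum fun k => (measurable_const.indicator (hmeas k)).aemeasurable]
        exact tsum_congr fun k => lintegral_indicator_const (hmeas k) _

lemma setOf_lt_posLog_div_dist_subset_ball {E : Type*} [PseudoMetricSpace E] (x : E) {R k : ℝ}
    (hR : 0 ≤ R) (hk : 0 ≤ k) :
    {ξ | k < log⁺ (R / dist x ξ)} ⊆ ball x (exp (-k) * R) := by
  intro ξ hξ
  have hlog : k < log (R / dist x ξ) := by
    simpa [posLog_apply, hk.not_gt] using hξ
  have hone : 1 < R / dist x ξ := (log_pos_iff (by positivity)).mp (hk.trans_lt hlog)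
  have hdist : 0 < dist x ξ := by
    by_contra! h
    norm_num [le_antisymm h dist_nonneg] at hone
  have hexp : exp k < R / dist x ξ := by rwa [lt_log_iff_exp_lt (by linarith)] at hlog
  rw [mem_ball, dist_comm, exp_neg, inv_mul_eq_div, lt_div_iff₀ (exp_pos k)]
  rwa [lt_div_iff₀ hdist, mul_comm] at hexp

theorem lintegral_posLog_div_dist_sq_le {E : Type*} [NormedAddCommGroup E] [NormedSpace ℝ E]
    [MeasurableSpace E] [BorelSpace E] [FiniteDimensional ℝ E] [Nontrivial E]
    (μ : Measure E) [μ.IsAddHaarMeasure] (x : E) {R : ℝ} (hR : 0 ≤ R) :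
    ∫⁻ ξ, ENNReal.ofReal (log⁺ (R / dist x ξ) ^ 2) ∂μ ≤
      ENNReal.ofReal ((1 + exp (-finrank ℝ E)) / (1 - exp (-finrank ℝ E)) ^ 2) *
        μ (ball x R) := by
  set q := exp (-finrank ℝ E)
  have hq₁ : q < 1 := exp_lt_one_iff.mpr (neg_lt_zero.mpr (Nat.cast_pos.mpr finrank_pos))
  have hsum := hasSum_two_mul_add_one_mul_geometric (exp_pos _).le hq₁
  have hlevel (k : ℕ) :
      μ {ξ | (k : ℝ) < log⁺ (R / dist x ξ)} ≤ ENNReal.ofReal (q ^ k) * μ (ball x R) := by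
    calc μ {ξ | (k : ℝ) < log⁺ (R / dist x ξ)}
        ≤ μ (ball x (exp (-k) * R)) :=
          measure_mono (setOf_lt_posLog_div_dist_subset_ball x hR k.cast_nonneg)
      _ = ENNReal.ofReal (q ^ k) * μ (ball x R) := by
          rw [addHaar_ball_mul μ x (exp_pos _).le, addHaar_ball_center μ x, ← exp_nat_mul,
            ← exp_nat_mul]
          ring_nf
  calc ∫⁻ ξ, ENNReal.ofReal (log⁺ (R / dist x ξ) ^ 2) ∂μ
      ≤ ∑' k : ℕ, ENNReal.ofReal (2 * k + 1) * μ {ξ | (k : ℝ) < log⁺ (R / dist x ξ)} :=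
        lintegral_ofReal_sq_le_tsum_measure_lt μ (by fun_prop) fun _ => posLog_nonneg
    _ ≤ ∑' k : ℕ, ENNReal.ofReal ((2 * k + 1) * q ^ k) * μ (ball x R) := by
        refine ENNReal.tsum_le_tsum fun k => ?_
        rw [ENNReal.ofReal_mul (by positivity), mul_assoc]
        gcongr
        exact hlevel k
    _ = ENNReal.ofReal ((1 + q) / (1 - q) ^ 2) * μ (ball x R) := by
        rw [ENNReal.tsum_mul_right, ← ENNReal.ofReal_tsum_of_nonneg (fun k => by positivity)
          hsum.summable, hsum.tsum_eq]

lemma lintegral_ofReal_mul_le_of_le_add {α : Type*} [MeasurableSpace α] {μ : Measure α}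
    {ρ F G : α → ℝ} {A M : ℝ} (hρ : Measurable ρ) (hρM : ∀ ξ, ρ ξ ≤ M)
    (hmass : ∫⁻ ξ, ENNReal.ofReal (ρ ξ) ∂μ ≤ 1) (hFG : ∀ ξ, F ξ ≤ A + G ξ) :
    ∫⁻ ξ, ENNReal.ofReal (ρ ξ) * ENNReal.ofReal (F ξ) ∂μ ≤
      ENNReal.ofReal A + ENNReal.ofReal M * ∫⁻ ξ, ENNReal.ofReal (G ξ) ∂μ := by
  have hρ' : Measurable fun ξ => ENNReal.ofReal (ρ ξ) := ENNReal.measurable_ofReal.comp hρ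
  calc ∫⁻ ξ, ENNReal.ofReal (ρ ξ) * ENNReal.ofReal (F ξ) ∂μ
      ≤ ∫⁻ ξ, ENNReal.ofReal (ρ ξ) * ENNReal.ofReal A +
          ENNReal.ofReal M * ENNReal.ofReal (G ξ) ∂μ := by
        refine lintegral_mono fun ξ => ?_
        calc ENNReal.ofReal (ρ ξ) * ENNReal.ofReal (F ξ)
            ≤ ENNReal.ofReal (ρ ξ) * (ENNReal.ofReal A + ENNReal.ofReal (G ξ)) := by
              gcongr
              exact (ENNReal.ofReal_le_ofReal (hFG ξ)).trans ENNReal.ofReal_add_le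
          _ ≤ _ := by
              rw [mul_add]
              gcongr
              exact hρM ξ
    _ = (∫⁻ ξ, ENNReal.ofReal (ρ ξ) ∂μ) * ENNReal.ofReal A +
          ENNReal.ofReal M * ∫⁻ ξ, ENNReal.ofReal (G ξ) ∂μ := by
        rw [lintegral_add_left (hρ'.mul_const _), lintegral_mul_const _ hρ',
          lintegral_const_mul' _ _ ENNReal.ofReal_ne_top]
    _ ≤ _ := by
        gcongr
        calc (∫⁻ ξ, ENNReal.ofReal (ρ ξ) ∂μ) * ENNReal.ofReal A ≤ 1 * ENNReal.ofReal A := by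
              gcongr
          _ = ENNReal.ofReal A := one_mul _

lemma sq_log_one_add_div_sq_le {a M : ℝ} (ha : 0 ≤ a) (hM : 0 < M) (r : ℝ) :
    log (1 + a / r ^ 2) ^ 2 ≤ 2 * log (1 + a * M) ^ 2 + 8 * log⁺ ((√M)⁻¹ / r) ^ 2 := by
  -- also at `r = 0`, where both sides are `0` because `a / 0 = 0`
  have hrescale : a / r ^ 2 = a * M * ((√M)⁻¹ / r) ^ 2 := by
    rw [div_pow, inv_pow, sq_sqrt hM.le]
    field_simp
  have hlog := log_one_add_mul_le (mul_nonneg ha hM.le) (sq_nonneg ((√M)⁻¹ / r))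
  rw [← hrescale, posLog_pow] at hlog
  have h₀ : 0 ≤ log (1 + a / r ^ 2) := log_nonneg (le_add_of_nonneg_right (by positivity))
  nlinarith [pow_le_pow_left₀ h₀ hlog 2,
    add_sq_le (a := log (1 + a * M)) (b := 2 * log⁺ ((√M)⁻¹ / r))]

lemma one_add_exp_neg_two_div_sq_le : (1 + exp (-2)) / (1 - exp (-2)) ^ 2 ≤ 3 := by
  have hq : exp (-2) ≤ 1 / 3 := by
    rw [exp_neg, one_div]
    exact inv_anti₀ (by norm_num) (by linarith [add_one_le_exp (2 : ℝ)])
  have hq₀ := exp_pos (-2)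
  rw [div_le_iff₀ (by nlinarith)]
  nlinarith

lemma lintegral_posLog_div_dist_sq_le_two_dim (x : EuclideanSpace ℝ (Fin 2)) {R : ℝ}
    (hR : 0 ≤ R) :
    ∫⁻ ξ, ENNReal.ofReal (log⁺ (R / dist x ξ) ^ 2) ≤ ENNReal.ofReal (3 * π * R ^ 2) := by
  calc ∫⁻ ξ, ENNReal.ofReal (log⁺ (R / dist x ξ) ^ 2)
      ≤ ENNReal.ofReal ((1 + exp (-2)) / (1 - exp (-2)) ^ 2) * volume (ball x R) := by
        simpa using lintegral_posLog_div_dist_sq_le volume x hR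
    _ ≤ ENNReal.ofReal 3 * (ENNReal.ofReal R ^ 2 * ENNReal.ofReal π) := by
        rw [EuclideanSpace.volume_ball_fin_two]
        gcongr
        exact one_add_exp_neg_two_div_sq_le
    _ = ENNReal.ofReal (3 * π * R ^ 2) := by
        rw [← ENNReal.ofReal_pow hR, ← ENNReal.ofReal_mul (by positivity),
          ← ENNReal.ofReal_mul (by norm_num)]
        ring_nf

/-- Weighted L² bound for the two-dimensional logarithmic Green's-function
bound against a density of unit mass bounded by `ρmax`. -/
theorem weighted_log_green_bound_two_dim :
    ∃ C : ℝ, 0 < C ∧ ∀ ρmax : ℝ, 0 < ρmax →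
      ∀ ρ : EuclideanSpace ℝ (Fin 2) → ℝ, Measurable ρ →
      (∀ ξ, 0 ≤ ρ ξ ∧ ρ ξ ≤ ρmax) →
      (∫⁻ ξ, ENNReal.ofReal (ρ ξ)) ≤ 1 →
      ∀ a : ℝ, 0 ≤ a → ∀ x : EuclideanSpace ℝ (Fin 2),
      (∫⁻ ξ, ENNReal.ofReal (ρ ξ) *
          ENNReal.ofReal ((Real.log (1 + a / dist x ξ ^ 2)) ^ 2)) ≤
        ENNReal.ofReal (C * (1 + (Real.log (1 + a * ρmax)) ^ 2)) := by
  refine ⟨100, by norm_num, ?_⟩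
  intro ρmax hρmax ρ hρm hρbd hρint a ha x
  set L := log (1 + a * ρmax)
  set ε := (√ρmax)⁻¹
  have hε : ρmax * ε ^ 2 = 1 := by rw [inv_pow, sq_sqrt hρmax.le, mul_inv_cancel₀ hρmax.ne']
  calc _ ≤ ENNReal.ofReal (2 * L ^ 2) + ENNReal.ofReal ρmax *
          ∫⁻ ξ, ENNReal.ofReal (8 * log⁺ (ε / dist x ξ) ^ 2) :=
        lintegral_ofReal_mul_le_of_le_add hρm (fun ξ => (hρbd ξ).2) hρint
          fun ξ => sq_log_one_add_div_sq_le ha hρmax (dist x ξ)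
    _ ≤ ENNReal.ofReal (2 * L ^ 2) +
          ENNReal.ofReal ρmax * (ENNReal.ofReal 8 * ENNReal.ofReal (3 * π * ε ^ 2)) := by
        simp_rw [ENNReal.ofReal_mul (by norm_num : (0 : ℝ) ≤ 8)]
        rw [lintegral_const_mul' _ _ ENNReal.ofReal_ne_top]
        gcongr
        exact lintegral_posLog_div_dist_sq_le_two_dim x (by positivity)
    _ = ENNReal.ofReal (2 * L ^ 2 + 24 * π) := by
        rw [← ENNReal.ofReal_mul (by norm_num), ← ENNReal.ofReal_mul hρmax.le,
          ← ENNReal.ofReal_add (by positivity) (by positivity)]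
        congr 1
        linear_combination (24 * π) * hε
    _ ≤ ENNReal.ofReal (100 * (1 + L ^ 2)) := ENNReal.ofReal_le_ofReal (by nlinarith [pi_lt_four])
end

section
/- Let d ≥ 3 be an integer and let Ω ⊆ ℝ^d be a Lebesgue-measurable set of finite Lebesgue measure. Then there exists a constant C > 0, depending only on d and the Lebesgue measure of Ω, such that for every p ∈ (1, d/(d−2)), every x ∈ ℝ^d, and every a > 0, ∫_Ω |x−ξ|^{(2−d)p} · min{ 1, (a / |x−ξ|²)^p } dξ ≤ C · (d−(d−2)p)^{−dp/(d+2p)} · a^{p(d−(d−2)p)/(d+2p)}. -/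
open MeasureTheory

open scoped ENNReal
open Metric Set Real in
lemma riesz_ball_lintegral (d : ℕ) (hd : 3 ≤ d) (x : EuclideanSpace ℝ (Fin d))
    {α ε : ℝ} (hα0 : 0 < α) (hαd : α < d) (hε : 0 < ε) :
    (∫⁻ ξ in Metric.ball x ε, ENNReal.ofReal (dist x ξ ^ (-α))) ≤
      volume (Metric.ball (0 : EuclideanSpace ℝ (Fin d)) 1) *
        ENNReal.ofReal (ε ^ ((d : ℝ) - α) * d / ((d : ℝ) - α)) := by
  have hfin : Module.finrank ℝ (EuclideanSpace ℝ (Fin d)) = d := finrank_euclideanSpace_fin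
  set B := volume (Metric.ball (0 : EuclideanSpace ℝ (Fin d)) 1) with hB
  have hBfin : B ≠ ∞ := measure_ball_lt_top.ne
  have hf_meas : Measurable fun ξ : EuclideanSpace ℝ (Fin d) => dist x ξ ^ (-α) := by
    fun_prop
  rw [lintegral_eq_lintegral_meas_le _
    (Filter.Eventually.of_forall fun ξ => rpow_nonneg dist_nonneg _) hf_meas.aemeasurable]
  set T := ε ^ (-α) with hT
  have hT0 : 0 < T := rpow_pos_of_pos hε _
  set s := (-α)⁻¹ * (d:ℝ) with hs
  have hs1 : s < -1 := by
    have h1 : (1:ℝ) < (d:ℝ)/α := (one_lt_div hα0).mpr hαd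
    rw [hs, inv_neg, neg_mul, inv_mul_eq_div]
    linarith
  have hsub : ∀ t : ℝ, 0 < t →
      {a : EuclideanSpace ℝ (Fin d) | t ≤ dist x a ^ (-α)} ⊆
        Metric.closedBall x (t ^ (-α)⁻¹) := by
    intro t ht a ha
    simp only [Set.mem_setOf_eq] at ha
    have hda : 0 < dist x a := by
      rcases lt_or_eq_of_le (dist_nonneg : (0:ℝ) ≤ dist x a) with h | h
      · exact h
      · exfalso
        rw [← h, Real.zero_rpow (neg_ne_zero.mpr hα0.ne')] at ha
        linarith
    have h2 : dist x a ≤ t ^ (-α)⁻¹ :=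
      (Real.le_rpow_inv_iff_of_neg hda ht (neg_lt_zero.mpr hα0)).mpr ha
    rw [Metric.mem_closedBall, dist_comm]
    exact h2
  have hSmeas : ∀ t : ℝ, MeasurableSet {a : EuclideanSpace ℝ (Fin d) | t ≤ dist x a ^ (-α)} :=
    fun t => measurableSet_le measurable_const hf_meas
  calc
    (∫⁻ t in Set.Ioi (0:ℝ),
        (volume.restrict (Metric.ball x ε)) {a | t ≤ dist x a ^ (-α)}) ≤
        ∫⁻ t in Set.Ioc (0:ℝ) T ∪ Set.Ioi T,
          (volume.restrict (Metric.ball x ε)) {a | t ≤ dist x a ^ (-α)} :=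
      lintegral_mono_set Set.Ioi_subset_Ioc_union_Ioi
    _ ≤ (∫⁻ t in Set.Ioc (0:ℝ) T,
          (volume.restrict (Metric.ball x ε)) {a | t ≤ dist x a ^ (-α)}) +
        ∫⁻ t in Set.Ioi T,
          (volume.restrict (Metric.ball x ε)) {a | t ≤ dist x a ^ (-α)} :=
      lintegral_union_le _ _ _
    _ ≤ (∫⁻ _t in Set.Ioc (0:ℝ) T, ENNReal.ofReal (ε ^ d) * B) +
        ∫⁻ t in Set.Ioi T, ENNReal.ofReal (t ^ s) * B := by
      refine add_le_add (setLIntegral_mono' measurableSet_Ioc fun t _ => ?_)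
        (setLIntegral_mono' measurableSet_Ioi fun t ht => ?_)
      · rw [Measure.restrict_apply (hSmeas t)]
        refine le_trans (measure_mono (Set.inter_subset_right.trans
          Metric.ball_subset_closedBall)) ?_
        rw [Measure.addHaar_closedBall volume x hε.le, hfin]
      · have ht0 : (0:ℝ) < t := hT0.trans ht
        rw [Measure.restrict_apply (hSmeas t)]
        refine le_trans (measure_mono (Set.inter_subset_left.trans (hsub t ht0))) ?_
        rw [Measure.addHaar_closedBall volume x (rpow_nonneg ht0.le _), hfin]
        apply le_of_eq
        congr 2
        rw [← Real.rpow_natCast (t ^ (-α)⁻¹) d, ← Real.rpow_mul ht0.le]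
    _ = ENNReal.ofReal (ε ^ d) * B * ENNReal.ofReal T +
        ENNReal.ofReal (∫ t in Set.Ioi T, t ^ s) * B := by
      rw [setLIntegral_const, Real.volume_Ioc, sub_zero]
      congr 1
      rw [lintegral_mul_const' _ _ hBfin]
      congr 1
      rw [ofReal_integral_eq_lintegral_ofReal (integrableOn_Ioi_rpow_of_lt hs1 hT0)]
      filter_upwards [ae_restrict_mem measurableSet_Ioi] with t ht
      exact rpow_nonneg (hT0.trans ht).le _
    _ ≤ B * ENNReal.ofReal (ε ^ ((d : ℝ) - α) * d / ((d : ℝ) - α)) := by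
      have hdα : (0:ℝ) < (d:ℝ) - α := by linarith
      have hsval : s + 1 = (α - (d:ℝ)) / α := by
        rw [hs, inv_neg, neg_mul, inv_mul_eq_div]
        field_simp
        ring
      have hs1' : s + 1 < 0 := by
        rw [hsval]
        exact div_neg_of_neg_of_pos (by linarith) hα0
      rw [integral_Ioi_rpow_of_lt hs1 hT0]
      have e1 : (ε:ℝ) ^ d * T = ε ^ ((d:ℝ) - α) := by
        rw [hT, ← Real.rpow_natCast ε d, ← Real.rpow_add hε]
        congr 1
      have e2 : T ^ (s + 1) = ε ^ ((d:ℝ) - α) := by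
        rw [hT, ← Real.rpow_mul hε.le]
        congr 1
        rw [hsval]
        field_simp
        ring
      have hP : (0:ℝ) ≤ ε ^ ((d:ℝ) - α) := rpow_nonneg hε.le _
      have hnn2 : (0:ℝ) ≤ -T ^ (s+1) / (s+1) := by
        rw [div_nonneg_iff]
        right
        refine ⟨?_, hs1'.le⟩
        rw [e2]
        linarith
      have key : (ε:ℝ) ^ d * T + -T ^ (s+1) / (s+1) = ε ^ ((d:ℝ)-α) * d / ((d:ℝ)-α) := by
        rw [e1, e2, hsval]
        field_simp [hα0.ne', hdα.ne', sub_ne_zero.mpr (ne_of_lt hαd)]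
        ring
      apply le_of_eq
      calc ENNReal.ofReal (ε ^ d) * B * ENNReal.ofReal T +
            ENNReal.ofReal (-T ^ (s+1) / (s+1)) * B
          = B * (ENNReal.ofReal ((ε:ℝ) ^ d * T) + ENNReal.ofReal (-T ^ (s+1) / (s+1))) := by
            rw [ENNReal.ofReal_mul (by positivity : (0:ℝ) ≤ ε ^ d)]
            ring
        _ = B * ENNReal.ofReal ((ε:ℝ) ^ d * T + -T ^ (s+1) / (s+1)) := by
            rw [ENNReal.ofReal_add (mul_nonneg (pow_nonneg hε.le d) hT0.le) hnn2]
        _ = B * ENNReal.ofReal (ε ^ ((d : ℝ) - α) * d / ((d : ℝ) - α)) := by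
            rw [key]

/-- L^p estimate for the Riesz-type bound on the Green's function of the
Laplacian in dimension `d ≥ 3`. -/
theorem riesz_green_Lp_bound
    (d : ℕ) (hd : 3 ≤ d) (Ω : Set (EuclideanSpace ℝ (Fin d)))
    (hΩ : MeasurableSet Ω) (hΩfin : volume Ω < ⊤) :
    ∃ C : ℝ, 0 < C ∧ ∀ p : ℝ, 1 < p → p < (d : ℝ) / ((d : ℝ) - 2) →
      ∀ x : EuclideanSpace ℝ (Fin d), ∀ a : ℝ, 0 < a →
      (∫⁻ ξ in Ω, ENNReal.ofReal
          (dist x ξ ^ (((2 : ℝ) - d) * p) * min 1 ((a / dist x ξ ^ 2) ^ p))) ≤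
        ENNReal.ofReal (C * ((d : ℝ) - ((d : ℝ) - 2) * p) ^
            (-((d : ℝ) * p) / ((d : ℝ) + 2 * p)) *
          a ^ (p * ((d : ℝ) - ((d : ℝ) - 2) * p) / ((d : ℝ) + 2 * p))) := by
  set B := volume (Metric.ball (0 : EuclideanSpace ℝ (Fin d)) 1) with hBdef
  set Br := B.toReal with hBr
  set Ωr := (volume Ω).toReal with hΩrdef
  have hBr0 : 0 ≤ Br := ENNReal.toReal_nonneg
  have hΩr0 : 0 ≤ Ωr := ENNReal.toReal_nonneg
  refine ⟨(d : ℝ) * Br + Ωr + 1, by positivity, ?_⟩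
  intro p hp1 hp2 x a ha
  have hd3 : (3:ℝ) ≤ (d:ℝ) := by exact_mod_cast hd
  have hd2 : (0:ℝ) < (d:ℝ) - 2 := by linarith
  have hp0 : (0:ℝ) < p := by linarith
  set α := ((d:ℝ) - 2) * p with hαdef
  set q := (d:ℝ) - ((d:ℝ) - 2) * p with hqdef
  have hα0 : 0 < α := mul_pos hd2 hp0
  have hq0 : 0 < q := by
    have h := (lt_div_iff₀ hd2).mp hp2
    rw [hqdef]
    nlinarith
  have hαd : α < (d:ℝ) := by
    rw [hαdef]
    rw [hqdef] at hq0
    linarith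
  have hqα : (d:ℝ) - α = q := by rw [hαdef, hqdef]
  set m := (d:ℝ) + 2 * p with hmdef
  have hm0 : (0:ℝ) < m := by rw [hmdef]; linarith
  have hqm : q - m = -((d:ℝ) * p) := by rw [hqdef, hmdef]; ring
  set ε := (q * a ^ p) ^ m⁻¹ with hεdef
  have hap : (0:ℝ) < a ^ p := Real.rpow_pos_of_pos ha p
  have hqa : (0:ℝ) < q * a ^ p := mul_pos hq0 hap
  have hε : 0 < ε := Real.rpow_pos_of_pos hqa _
  have hBeq : B = ENNReal.ofReal Br := by
    rw [hBr, ENNReal.ofReal_toReal measure_ball_lt_top.ne]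
  have hΩeq : volume Ω = ENNReal.ofReal Ωr := by
    rw [hΩrdef, ENNReal.ofReal_toReal hΩfin.ne]
  have hdp0 : (0:ℝ) ≤ (d:ℝ) * p := mul_nonneg (Nat.cast_nonneg d) hp0.le
  -- pointwise bound outside the ball
  have hTermB : ∀ ξ ∈ Ω \ Metric.ball x ε,
      ENNReal.ofReal (dist x ξ ^ (((2:ℝ) - d) * p) * min 1 ((a / dist x ξ ^ 2) ^ p)) ≤
        ENNReal.ofReal (a ^ p * ε ^ (-((d:ℝ) * p))) := by
    intro ξ hξ
    have hr : ε ≤ dist x ξ := by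
      have h2 := hξ.2
      rw [Metric.mem_ball, dist_comm, not_lt] at h2
      exact h2
    have hr0 : 0 < dist x ξ := lt_of_lt_of_le hε hr
    apply ENNReal.ofReal_le_ofReal
    calc dist x ξ ^ (((2:ℝ) - d) * p) * min 1 ((a / dist x ξ ^ 2) ^ p)
        ≤ dist x ξ ^ (((2:ℝ) - d) * p) * (a / dist x ξ ^ 2) ^ p :=
          mul_le_mul_of_nonneg_left (min_le_right _ _) (Real.rpow_nonneg dist_nonneg _)
      _ = a ^ p * dist x ξ ^ (-((d:ℝ) * p)) := by
          rw [Real.div_rpow ha.le (sq_nonneg _), ← Real.rpow_natCast (dist x ξ) 2,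
            ← Real.rpow_mul dist_nonneg, mul_comm (dist x ξ ^ (((2:ℝ) - (d:ℝ)) * p)),
            div_mul_eq_mul_div, mul_div_assoc, ← Real.rpow_sub hr0]
          congr 2
          push_cast
          ring
      _ ≤ a ^ p * ε ^ (-((d:ℝ) * p)) :=
          mul_le_mul_of_nonneg_left
            (Real.rpow_le_rpow_of_nonpos hε hr (neg_nonpos.mpr hdp0)) hap.le
  -- the main splitting
  have hX : (0:ℝ) ≤ q ^ (-((d:ℝ) * p) / m) * a ^ (p * q / m) :=
    mul_nonneg (Real.rpow_nonneg hq0.le _) (Real.rpow_nonneg ha.le _)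
  have key : ∀ c : ℝ, ε ^ c = q ^ (m⁻¹ * c) * a ^ (p * (m⁻¹ * c)) := by
    intro c
    rw [hεdef, ← Real.rpow_mul hqa.le, Real.mul_rpow hq0.le hap.le, ← Real.rpow_mul ha.le]
  have hm1 : m⁻¹ * m = 1 := inv_mul_cancel₀ hm0.ne'
  have e1 : m⁻¹ * q - 1 = -((d:ℝ) * p) / m := by
    rw [eq_div_iff hm0.ne']
    linear_combination q * hm1 + hqm
  have e3 : q ^ (m⁻¹ * q) / q = q ^ (-((d:ℝ) * p) / m) := by
    rw [← e1, Real.rpow_sub hq0, Real.rpow_one]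
  have t1 : Br * (ε ^ ((d:ℝ) - α) * (d:ℝ) / ((d:ℝ) - α)) =
      (d:ℝ) * Br * (q ^ (-((d:ℝ) * p) / m) * a ^ (p * q / m)) := by
    rw [hqα, key q]
    have e2 : p * (m⁻¹ * q) = p * q / m := by
      rw [eq_div_iff hm0.ne']
      linear_combination p * q * hm1
    rw [e2, ← e3]
    field_simp
  have t2 : a ^ p * ε ^ (-((d:ℝ) * p)) * Ωr =
      Ωr * (q ^ (-((d:ℝ) * p) / m) * a ^ (p * q / m)) := by
    rw [key (-((d:ℝ) * p)), inv_mul_eq_div]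
    have e5 : a ^ p * a ^ (p * (-((d:ℝ) * p) / m)) = a ^ (p * q / m) := by
      rw [← Real.rpow_add ha]
      congr 1
      rw [← hqm]
      field_simp
      ring
    rw [← e5]
    ring
  calc (∫⁻ ξ in Ω, ENNReal.ofReal
          (dist x ξ ^ (((2 : ℝ) - d) * p) * min 1 ((a / dist x ξ ^ 2) ^ p)))
      = ∫⁻ ξ in (Ω ∩ Metric.ball x ε) ∪ (Ω \ Metric.ball x ε), ENNReal.ofReal
          (dist x ξ ^ (((2 : ℝ) - d) * p) * min 1 ((a / dist x ξ ^ 2) ^ p)) := by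
        rw [Set.inter_union_diff]
    _ ≤ (∫⁻ ξ in Ω ∩ Metric.ball x ε, ENNReal.ofReal
          (dist x ξ ^ (((2 : ℝ) - d) * p) * min 1 ((a / dist x ξ ^ 2) ^ p))) +
        ∫⁻ ξ in Ω \ Metric.ball x ε, ENNReal.ofReal
          (dist x ξ ^ (((2 : ℝ) - d) * p) * min 1 ((a / dist x ξ ^ 2) ^ p)) :=
        lintegral_union_le _ _ _
    _ ≤ B * ENNReal.ofReal (ε ^ ((d:ℝ) - α) * (d:ℝ) / ((d:ℝ) - α)) +
        ENNReal.ofReal (a ^ p * ε ^ (-((d:ℝ) * p))) * volume Ω := by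
        refine add_le_add ?_ ?_
        · refine le_trans (lintegral_mono_set Set.inter_subset_right) ?_
          refine le_trans (setLIntegral_mono' measurableSet_ball fun ξ _ => ?_)
            (riesz_ball_lintegral d hd x hα0 hαd hε)
          apply ENNReal.ofReal_le_ofReal
          have h1 : dist x ξ ^ (((2:ℝ) - d) * p) = dist x ξ ^ (-α) := by
            congr 1
            rw [hαdef]
            ring
          rw [h1]
          exact mul_le_of_le_one_right (Real.rpow_nonneg dist_nonneg _) (min_le_left _ _)
        · calc (∫⁻ ξ in Ω \ Metric.ball x ε, ENNReal.ofReal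
                (dist x ξ ^ (((2 : ℝ) - d) * p) * min 1 ((a / dist x ξ ^ 2) ^ p)))
              ≤ ∫⁻ _ξ in Ω \ Metric.ball x ε, ENNReal.ofReal (a ^ p * ε ^ (-((d:ℝ) * p))) :=
              setLIntegral_mono' (hΩ.diff measurableSet_ball) hTermB
            _ = ENNReal.ofReal (a ^ p * ε ^ (-((d:ℝ) * p))) * volume (Ω \ Metric.ball x ε) :=
              setLIntegral_const _ _
            _ ≤ _ := mul_le_mul_right (measure_mono Set.diff_subset) _
    _ ≤ ENNReal.ofReal (((d:ℝ) * Br + Ωr + 1) * q ^ (-((d:ℝ) * p) / m) *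
          a ^ (p * q / m)) := by
        rw [hBeq, hΩeq,
          ← ENNReal.ofReal_mul hBr0,
          ← ENNReal.ofReal_mul (mul_nonneg hap.le (Real.rpow_nonneg hε.le _)),
          ← ENNReal.ofReal_add
            (mul_nonneg hBr0 (div_nonneg (mul_nonneg (Real.rpow_nonneg hε.le _)
              (Nat.cast_nonneg d)) (by linarith)))
            (mul_nonneg (mul_nonneg hap.le (Real.rpow_nonneg hε.le _)) hΩr0)]
        apply ENNReal.ofReal_le_ofReal
        rw [t1, t2, mul_assoc]
        nlinarith [hX]
end

section
/- Let Ω ⊂ ℝ be a bounded open set and let d(x) denote the Euclidean distance from x ∈ Ω to the complement of Ω. Let K_1, …, K_N be a finite partition of Ω into Lebesgue-measurable sets and let ρ_1, …, ρ_N > 0 be constants defining ρ : Ω → ℝ by ρ = ρ_i on K_i, with ∫_Ω ρ dx = 1; write |K_i| for the Lebesgue measure of K_i and d_{K_i} = sup_{x ∈ K_i} d(x). Let C₀ > 0 and let G : Ω × Ω → ℝ be measurable with 0 ≤ G(x,ξ) ≤ C₀ √(d(x) d(ξ)) for all x, ξ ∈ Ω. Suppose λ > 0 and u : Ω → ℝ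 is measurable, u > 0 almost everywhere, 0 < ∫_Ω ρ u² dx < ∞, and u(x) = λ ∫_Ω G(x,ξ) ρ(ξ) u(ξ) dξ for almost every x ∈ Ω. Then λ ≥ C₀^{−1} · ( Σ_{i=1}^N ρ_i |K_i| d_{K_i} )^{−1}. -/
/-!
Put `I = ∫_Ω ρ √d u`. The kernel bound turns the integral equation into the pointwise estimate
`u(x) ≤ λ C₀ √d(x) I`; integrating it against `ρ √d` gives `I ≤ λ C₀ I ∫_Ω ρ d`. As `u > 0`,
`I > 0`, so `1 ≤ λ C₀ ∫_Ω ρ d`, and `∫_Ω ρ d ≤ Σ ρ_i |K_i| d_{K_i}` since `ρ = ρ_i` on `K_i`.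
-/

namespace MeasureTheory

variable {α : Type*} [MeasurableSpace α] {μ : Measure α}

theorem integral_pos_of_ae_pos {f : α → ℝ} (hμ : μ ≠ 0) (hf : ∀ᵐ x ∂μ, 0 < f x)
    (hfi : Integrable f μ) : 0 < ∫ x, f x ∂μ := by
  rw [integral_pos_iff_support_of_nonneg_ae (hf.mono fun _ hx => hx.le) hfi, pos_iff_ne_zero,
    Ne, measure_eq_zero_iff_ae_notMem]
  intro h
  apply hμ
  rw [← ae_eq_bot, ← Filter.eventually_false_iff_eq_bot]
  filter_upwards [h, hf] with x hx hfx using hx hfx.ne'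

theorem Integrable.mul_mul_of_mul_sq {w f g : α → ℝ} (hw : 0 ≤ᵐ[μ] w)
    (hmeas : AEStronglyMeasurable (fun x => w x * f x * g x) μ)
    (hf : Integrable (fun x => w x * f x ^ 2) μ) (hg : Integrable (fun x => w x * g x ^ 2) μ) :
    Integrable (fun x => w x * f x * g x) μ := by
  refine ((hf.add hg).div_const 2).mono' hmeas ?_
  filter_upwards [hw] with x hwx
  have hfg : |f x| * |g x| ≤ (f x ^ 2 + g x ^ 2) / 2 := by
    nlinarith [two_mul_le_add_sq |f x| |g x|, sq_abs (f x), sq_abs (g x)]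
  calc ‖w x * f x * g x‖ = w x * (|f x| * |g x|) := by
        rw [Real.norm_eq_abs, mul_assoc, abs_mul, abs_mul, abs_of_nonneg hwx]
    _ ≤ w x * ((f x ^ 2 + g x ^ 2) / 2) := by gcongr
    _ = (w x * f x ^ 2 + w x * g x ^ 2) / 2 := by ring

theorem one_le_mul_integral_mul_sq_of_kernel_le {G : α → α → ℝ} {w φ u : α → ℝ} {C lam : ℝ}
    (hlam : 0 ≤ lam) (hw : 0 ≤ᵐ[μ] w) (hφ : 0 ≤ᵐ[μ] φ) (hu : 0 ≤ᵐ[μ] u)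
    (hG : ∀ᵐ x ∂μ, ∀ᵐ ξ ∂μ, 0 ≤ G x ξ ∧ G x ξ ≤ C * (φ x * φ ξ))
    (hwφu : Integrable (fun ξ => w ξ * φ ξ * u ξ) μ)
    (hwφ2 : Integrable (fun x => w x * φ x ^ 2) μ)
    (hpos : 0 < ∫ ξ, w ξ * φ ξ * u ξ ∂μ)
    (hrep : ∀ᵐ x ∂μ, u x = lam * ∫ ξ, G x ξ * w ξ * u ξ ∂μ) :
    1 ≤ lam * C * ∫ x, w x * φ x ^ 2 ∂μ := by
  set I := ∫ ξ, w ξ * φ ξ * u ξ ∂μ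
  have hu_le : ∀ᵐ x ∂μ, u x ≤ lam * C * I * φ x := by
    filter_upwards [hG, hrep] with x hGx hx
    have hint_le : ∫ ξ, G x ξ * w ξ * u ξ ∂μ ≤ ∫ ξ, C * φ x * (w ξ * φ ξ * u ξ) ∂μ := by
      refine integral_mono_of_nonneg ?_ (hwφu.const_mul _) ?_
      · filter_upwards [hGx, hw, hu] with ξ hGξ hwξ huξ
        exact mul_nonneg (mul_nonneg hGξ.1 hwξ) huξ
      · filter_upwards [hGx, hw, hu] with ξ hGξ hwξ huξ
        calc G x ξ * w ξ * u ξ ≤ C * (φ x * φ ξ) * w ξ * u ξ := by gcongr; exact hGξ.2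
          _ = C * φ x * (w ξ * φ ξ * u ξ) := by ring
    rw [integral_const_mul] at hint_le
    calc u x = lam * ∫ ξ, G x ξ * w ξ * u ξ ∂μ := hx
      _ ≤ lam * (C * φ x * I) := by gcongr
      _ = lam * C * I * φ x := by ring
  have hI_le : I ≤ I * (lam * C * ∫ x, w x * φ x ^ 2 ∂μ) := by
    rw [← integral_const_mul, ← integral_const_mul]
    refine integral_mono_of_nonneg ?_ ((hwφ2.const_mul _).const_mul _) ?_
    · filter_upwards [hw, hφ, hu] with x hwx hφx hux
      exact mul_nonneg (mul_nonneg hwx hφx) hux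
    · filter_upwards [hw, hφ, hu_le] with x hwx hφx hux
      calc w x * φ x * u x ≤ w x * φ x * (lam * C * I * φ x) := by
            gcongr; exact mul_nonneg hwx hφx
        _ = I * (lam * C * (w x * φ x ^ 2)) := by ring
  exact (le_mul_iff_one_le_right hpos).1 hI_le

theorem one_le_mul_integral_mul_of_kernel_le_sqrt {G : α → α → ℝ} {w d u : α → ℝ} {C lam : ℝ}
    (hμ : μ ≠ 0) (hlam : 0 ≤ lam) (hw : ∀ᵐ x ∂μ, 0 < w x) (hd : ∀ᵐ x ∂μ, 0 < d x)
    (hu : ∀ᵐ x ∂μ, 0 < u x) (hw_meas : AEMeasurable w μ) (hd_meas : AEMeasurable d μ)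
    (hu_meas : AEMeasurable u μ)
    (hG : ∀ᵐ x ∂μ, ∀ᵐ ξ ∂μ, 0 ≤ G x ξ ∧ G x ξ ≤ C * √(d x * d ξ))
    (hwd : Integrable (fun x => w x * d x) μ) (hwu : Integrable (fun x => w x * u x ^ 2) μ)
    (hrep : ∀ᵐ x ∂μ, u x = lam * ∫ ξ, G x ξ * w ξ * u ξ ∂μ) :
    1 ≤ lam * C * ∫ x, w x * d x ∂μ := by
  have hsqrt : (fun x => w x * √(d x) ^ 2) =ᵐ[μ] fun x => w x * d x := by
    filter_upwards [hd] with x hx using by rw [Real.sq_sqrt hx.le]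
  have hwd' : Integrable (fun x => w x * √(d x) ^ 2) μ := hwd.congr hsqrt.symm
  have hI_int : Integrable (fun x => w x * √(d x) * u x) μ :=
    Integrable.mul_mul_of_mul_sq (hw.mono fun _ hx => hx.le)
      ((hw_meas.mul hd_meas.sqrt).mul hu_meas).aestronglyMeasurable hwd' hwu
  have hI_pos : 0 < ∫ x, w x * √(d x) * u x ∂μ := by
    refine integral_pos_of_ae_pos hμ ?_ hI_int
    filter_upwards [hw, hd, hu] with x hwx hdx hux
    exact mul_pos (mul_pos hwx (Real.sqrt_pos.2 hdx)) hux
  have hG' : ∀ᵐ x ∂μ, ∀ᵐ ξ ∂μ, 0 ≤ G x ξ ∧ G x ξ ≤ C * (√(d x) * √(d ξ)) := by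
    filter_upwards [hG, hd] with x hGx hdx
    simpa only [Real.sqrt_mul hdx.le] using hGx
  rw [← integral_congr_ae hsqrt]
  exact one_le_mul_integral_mul_sq_of_kernel_le hlam (hw.mono fun _ hx => hx.le)
    (Filter.Eventually.of_forall fun x => Real.sqrt_nonneg (d x)) (hu.mono fun _ hx => hx.le)
    hG' hI_int hwd' hI_pos hrep

section PiecewiseConstant

variable {ι : Type*} {K : ι → Set α} {c : ι → ℝ} {ρ : α → ℝ}

theorem aestronglyMeasurable_of_forall_mem_eq_const [Countable ι] (hK : ∀ i, MeasurableSet (K i))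
    (hρ : ∀ i, ∀ x ∈ K i, ρ x = c i) : AEStronglyMeasurable ρ (μ.restrict (⋃ i, K i)) :=
  aestronglyMeasurable_iUnion_iff.2 fun i =>
    aestronglyMeasurable_const.congr
      ((ae_restrict_of_forall_mem (hK i) (hρ i)).mono fun _ h => h.symm)

theorem IntegrableOn.mul_of_forall_mem_eq_const [Finite ι] (hK : ∀ i, MeasurableSet (K i))
    (hρ : ∀ i, ∀ x ∈ K i, ρ x = c i) {f : α → ℝ} (hf : IntegrableOn f (⋃ i, K i) μ) :
    IntegrableOn (fun x => ρ x * f x) (⋃ i, K i) μ :=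
  integrableOn_finite_iUnion.2 fun i =>
    IntegrableOn.congr_fun ((hf.mono_set (Set.subset_iUnion K i)).const_mul (c i))
      (fun x hx => by simp only [hρ i x hx]) (hK i)

theorem setIntegral_iUnion_mul_le_sum [Fintype ι] (hK : ∀ i, MeasurableSet (K i))
    (hdisj : Pairwise (Function.onFun Disjoint K)) (hc : ∀ i, 0 ≤ c i)
    (hρ : ∀ i, ∀ x ∈ K i, ρ x = c i) (hfin : ∀ i, μ (K i) ≠ ⊤) {f : α → ℝ}
    (hbdd : ∀ i, BddAbove (f '' K i)) (hint : IntegrableOn (fun x => ρ x * f x) (⋃ i, K i) μ) :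
    ∫ x in ⋃ i, K i, ρ x * f x ∂μ ≤ ∑ i, c i * μ.real (K i) * ⨆ x : K i, f x := by
  rw [integral_iUnion hK hdisj hint, tsum_fintype]
  refine Finset.sum_le_sum fun i _ => ?_
  calc ∫ x in K i, ρ x * f x ∂μ ≤ ∫ _ in K i, c i * ⨆ x : K i, f x ∂μ :=
        setIntegral_mono_on (hint.mono_set (Set.subset_iUnion K i))
          (integrableOn_const (hfin i)) (hK i) fun x hx => by
            rw [hρ i x hx]; exact mul_le_mul_of_nonneg_left (le_ciSup_set (hbdd i) hx) (hc i)
    _ = c i * μ.real (K i) * ⨆ x : K i, f x := by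
        rw [setIntegral_const, smul_eq_mul]; ring

end PiecewiseConstant

end MeasureTheory

open Metric in
theorem IsOpen.infDist_compl_pos {E : Type*} [NormedAddCommGroup E] [NormedSpace ℝ E]
    [Nontrivial E] {Ω : Set E} (hΩo : IsOpen Ω) (hΩb : Bornology.IsBounded Ω) {x : E}
    (hx : x ∈ Ω) : 0 < infDist x Ωᶜ :=
  (hΩo.isClosed_compl.notMem_iff_infDist_pos
    (Set.nonempty_compl.2 fun h => NormedSpace.unbounded_univ ℝ E (h ▸ hΩb))).1 (not_not.2 hx)

open MeasureTheory Metric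

theorem eigenvalue_lower_bound_one_dim_general
    (Ω : Set ℝ) (hΩo : IsOpen Ω) (hΩb : Bornology.IsBounded Ω)
    (N : ℕ) (K : Fin N → Set ℝ) (hKmeas : ∀ i, MeasurableSet (K i))
    (hKdisj : Pairwise (Function.onFun Disjoint K)) (hKcover : (⋃ i, K i) = Ω)
    (ρv : Fin N → ℝ) (hρv : ∀ i, 0 < ρv i)
    (ρ : ℝ → ℝ) (hρ : ∀ i, ∀ x ∈ K i, ρ x = ρv i)
    (C₀ : ℝ) (hC₀ : 0 < C₀)
    (G : ℝ → ℝ → ℝ)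
    (hG : ∀ x ∈ Ω, ∀ ξ ∈ Ω, 0 ≤ G x ξ ∧
      G x ξ ≤ C₀ * Real.sqrt (Metric.infDist x Ωᶜ * Metric.infDist ξ Ωᶜ))
    (lam : ℝ) (hlam : 0 < lam)
    (u : ℝ → ℝ) (humeas : Measurable u)
    (hupos : ∀ᵐ x ∂(volume.restrict Ω), 0 < u x)
    (hintpos : 0 < ∫⁻ x in Ω, ENNReal.ofReal (ρ x * u x ^ 2))
    (hintfin : (∫⁻ x in Ω, ENNReal.ofReal (ρ x * u x ^ 2)) < ⊤)
    (hrep : ∀ᵐ x ∂(volume.restrict Ω),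
      u x = lam * ∫ ξ in Ω, G x ξ * ρ ξ * u ξ) :
    C₀⁻¹ * (∑ i, ρv i * (volume (K i)).toReal *
        (⨆ x : K i, Metric.infDist (x : ℝ) Ωᶜ))⁻¹ ≤ lam := by
  have hΩ : ∀ᵐ x ∂volume.restrict Ω, x ∈ Ω := ae_restrict_mem hΩo.measurableSet
  have hKΩ : ∀ i, K i ⊆ Ω := fun i => hKcover ▸ Set.subset_iUnion K i
  have hρ_pos : ∀ x ∈ Ω, 0 < ρ x := by
    rw [← hKcover]
    intro x hx
    obtain ⟨i, hi⟩ := Set.mem_iUnion.1 hx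
    exact hρ i x hi ▸ hρv i
  have hρ_meas : AEStronglyMeasurable ρ (volume.restrict Ω) :=
    hKcover ▸ aestronglyMeasurable_of_forall_mem_eq_const hKmeas hρ
  have hd_int : IntegrableOn (fun x => infDist x Ωᶜ) Ω :=
    ((continuous_infDist_pt _).locallyIntegrable.integrableOn_isCompact
      hΩb.isCompact_closure).mono_set subset_closure
  have hρd_int : IntegrableOn (fun x => ρ x * infDist x Ωᶜ) Ω :=
    hKcover ▸ IntegrableOn.mul_of_forall_mem_eq_const hKmeas hρ (hKcover ▸ hd_int)
  have hρu_int : Integrable (fun x => ρ x * u x ^ 2) (volume.restrict Ω) := by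
    refine ⟨hρ_meas.mul (humeas.pow_const 2).aestronglyMeasurable,
      (hasFiniteIntegral_iff_ofReal ?_).2 hintfin⟩
    filter_upwards [hΩ] with x hx using mul_nonneg (hρ_pos x hx).le (sq_nonneg _)
  have hJ := one_le_mul_integral_mul_of_kernel_le_sqrt (fun h => by simp [h] at hintpos)
    hlam.le (by filter_upwards [hΩ] with x hx using hρ_pos x hx)
    (by filter_upwards [hΩ] with x hx using hΩo.infDist_compl_pos hΩb hx) hupos
    hρ_meas.aemeasurable (continuous_infDist_pt _).aemeasurable humeas.aemeasurable
    (by filter_upwards [hΩ] with x hx; filter_upwards [hΩ] with ξ hξ using hG x hx ξ hξ)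
    hρd_int hρu_int hrep
  have hJS := setIntegral_iUnion_mul_le_sum hKmeas hKdisj (fun i => (hρv i).le) hρ
    (fun i => ((measure_mono (hKΩ i)).trans_lt hΩb.measure_lt_top).ne)
    (fun i => ((lipschitz_infDist_pt _).isBounded_image (hΩb.subset (hKΩ i))).bddAbove)
    (hKcover ▸ hρd_int)
  rw [hKcover] at hJS
  have hCS : 1 ≤ lam * (C₀ * ∑ i, ρv i * (volume (K i)).toReal * ⨆ x : K i, infDist x.1 Ωᶜ) :=
    hJ.trans (by rw [← mul_assoc]; gcongr; exact hJS)
  rw [← mul_inv, inv_le_iff_one_le_mul₀' (pos_of_mul_pos_right (one_pos.trans_le hCS) hlam.le),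
    mul_comm]
  exact hCS

/-- One-dimensional lower bound for the smallest eigenvalue of the
density-weighted eigenvalue problem `-u'' = λ ρ u` with homogeneous Dirichlet
boundary conditions, via the Green's-function bound
`G(x,ξ) ≤ C₀ √(d(x) d(ξ))`. -/
theorem eigenvalue_lower_bound_one_dim
    (Ω : Set ℝ) (hΩo : IsOpen Ω) (hΩb : Bornology.IsBounded Ω)
    (N : ℕ) (K : Fin N → Set ℝ) (hKmeas : ∀ i, MeasurableSet (K i))
    (hKdisj : Pairwise (Function.onFun Disjoint K)) (hKcover : (⋃ i, K i) = Ω)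
    (ρv : Fin N → ℝ) (hρv : ∀ i, 0 < ρv i)
    (ρ : ℝ → ℝ) (hρ : ∀ i, ∀ x ∈ K i, ρ x = ρv i)
    (hρint : (∫ x in Ω, ρ x) = 1)
    (C₀ : ℝ) (hC₀ : 0 < C₀)
    (G : ℝ → ℝ → ℝ) (hGmeas : Measurable (Function.uncurry G))
    (hG : ∀ x ∈ Ω, ∀ ξ ∈ Ω, 0 ≤ G x ξ ∧
      G x ξ ≤ C₀ * Real.sqrt (Metric.infDist x Ωᶜ * Metric.infDist ξ Ωᶜ))
    (lam : ℝ) (hlam : 0 < lam)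
    (u : ℝ → ℝ) (humeas : Measurable u)
    (hupos : ∀ᵐ x ∂(volume.restrict Ω), 0 < u x)
    (hintpos : 0 < ∫⁻ x in Ω, ENNReal.ofReal (ρ x * u x ^ 2))
    (hintfin : (∫⁻ x in Ω, ENNReal.ofReal (ρ x * u x ^ 2)) < ⊤)
    (hrep : ∀ᵐ x ∂(volume.restrict Ω),
      u x = lam * ∫ ξ in Ω, G x ξ * ρ ξ * u ξ) :
    C₀⁻¹ * (∑ i, ρv i * (volume (K i)).toReal *
        (⨆ x : K i, Metric.infDist (x : ℝ) Ωᶜ))⁻¹ ≤ lam :=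
  eigenvalue_lower_bound_one_dim_general Ω hΩo hΩb N K hKmeas hKdisj hKcover ρv hρv ρ hρ C₀ hC₀ G hG
    lam hlam u humeas hupos hintpos hintfin hrep
end

section
/- Let m, M, N be positive integers and let A_1, …, A_M be N×N real symmetric positive semidefinite matrices. Suppose that for each k there is an index set S_k ⊆ {1, …, N} with |S_k| ≤ m such that (A_k)_{ij} = 0 whenever i ∉ S_k or j ∉ S_k. Let A = Σ_{k=1}^M A_k. Then max_{1 ≤ j ≤ N} A_{jj} ≤ λ_max(A) ≤ m · max_{1 ≤ j ≤ N} A_{jj}. -/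
/-!
The lower bound is the Rayleigh bound `x ⬝ᵥ A *ᵥ x ≤ λ_max ∑ xⱼ²` evaluated at the unit vectors.
For the upper bound evaluate `A` at a unit eigenvector `v` of `λ_max`. Positive semidefiniteness
of `A k` gives `2 vᵢ (A k)ᵢⱼ vⱼ ≤ (A k)ᵢᵢ vᵢ² + (A k)ⱼⱼ vⱼ²`; summing over the pairs `i, j ∈ S k`
yields `v ⬝ᵥ A k *ᵥ v ≤ m ∑ⱼ (A k)ⱼⱼ vⱼ²`, and summing over `k` gives
`λ_max ≤ m ∑ⱼ Aⱼⱼ vⱼ² ≤ m maxⱼ Aⱼⱼ`.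
-/

open Finset Matrix

theorem sum_mul_sq_le_iSup_mul_sum_sq {κ : Type*} [Fintype κ] (d x : κ → ℝ) :
    ∑ i, d i * x i ^ 2 ≤ (⨆ i, d i) * ∑ i, x i ^ 2 := by
  rw [mul_sum]
  gcongr with i
  exact le_ciSup (Set.finite_range d).bddAbove i

namespace Matrix

variable {ι : Type*} [Fintype ι] [DecidableEq ι] {B : Matrix ι ι ℝ}

theorem PosSemidef.two_mul_mul_apply_mul_le (hB : B.PosSemidef) (x : ι → ℝ) (i j : ι) :
    2 * (x i * B i j * x j) ≤ B i i * x i ^ 2 + B j j * x j ^ 2 := by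
  rcases eq_or_ne i j with rfl | hij
  · linarith [show x i * B i i * x i = B i i * x i ^ 2 by ring]
  have hsymm : B j i = B i j := hB.isHermitian.apply i j
  have hnonneg := hB.dotProduct_mulVec_nonneg (Pi.single i (x i) - Pi.single j (x j))
  simp only [star_trivial, mulVec_sub, mulVec_single, op_smul_eq_smul, dotProduct_sub,
    dotProduct_smul, sub_dotProduct, single_dotProduct, col_apply, hsymm, smul_eq_mul,
    sub_nonneg] at hnonneg
  linarith

theorem PosSemidef.dotProduct_mulVec_le_card_mul (hB : B.PosSemidef) {S : Finset ι}
    (hS : ∀ i j, i ∉ S ∨ j ∉ S → B i j = 0) (x : ι → ℝ) :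
    x ⬝ᵥ B *ᵥ x ≤ #S * ∑ j, B j j * x j ^ 2 := by
  have hquad : x ⬝ᵥ B *ᵥ x = ∑ i ∈ S, ∑ j ∈ S, x i * B i j * x j := by
    simp only [dotProduct, mulVec, mul_sum, ← mul_assoc]
    rw [← sum_subset S.subset_univ fun i _ hi ↦ sum_eq_zero fun j _ ↦ by simp [hS i j (.inl hi)]]
    refine sum_congr rfl fun i _ ↦ (sum_subset S.subset_univ fun j _ hj ↦ ?_).symm
    simp [hS i j (.inr hj)]
  have hdiag : ∑ j ∈ S, B j j * x j ^ 2 = ∑ j, B j j * x j ^ 2 :=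
    sum_subset S.subset_univ fun j _ hj ↦ by simp [hS j j (.inl hj)]
  calc x ⬝ᵥ B *ᵥ x = ∑ i ∈ S, ∑ j ∈ S, x i * B i j * x j := hquad
    _ ≤ ∑ i ∈ S, ∑ j ∈ S, (B i i * x i ^ 2 + B j j * x j ^ 2) / 2 := by
      gcongr with i _ j _
      linarith [hB.two_mul_mul_apply_mul_le x i j]
    _ = #S * ∑ j ∈ S, B j j * x j ^ 2 := by
      simp only [add_div, sum_add_distrib, sum_const, nsmul_eq_mul, ← mul_sum, ← sum_div]
      ring
    _ = #S * ∑ j, B j j * x j ^ 2 := by rw [hdiag]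

theorem dotProduct_sum_mulVec_le_of_card_support_le {κ : Type*} [Fintype κ]
    {A : κ → Matrix ι ι ℝ} (hA : ∀ k, (A k).PosSemidef) {S : κ → Finset ι} {m : ℕ}
    (hS : ∀ k, #(S k) ≤ m) (hsupp : ∀ k i j, i ∉ S k ∨ j ∉ S k → A k i j = 0) (x : ι → ℝ) :
    x ⬝ᵥ (∑ k, A k) *ᵥ x ≤ m * ∑ j, (∑ k, A k) j j * x j ^ 2 := by
  calc x ⬝ᵥ (∑ k, A k) *ᵥ x = ∑ k, x ⬝ᵥ A k *ᵥ x := by rw [sum_mulVec, dotProduct_sum]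
    _ ≤ ∑ k, (m : ℝ) * ∑ j, A k j j * x j ^ 2 := by
      gcongr with k
      calc x ⬝ᵥ A k *ᵥ x ≤ #(S k) * ∑ j, A k j j * x j ^ 2 :=
            (hA k).dotProduct_mulVec_le_card_mul (hsupp k) x
        _ ≤ m * ∑ j, A k j j * x j ^ 2 :=
            mul_le_mul_of_nonneg_right (by exact_mod_cast hS k)
              (sum_nonneg fun j _ ↦ mul_nonneg (hA k).diag_nonneg (sq_nonneg _))
    _ = m * ∑ j, (∑ k, A k) j j * x j ^ 2 := by
      simp only [← mul_sum, sum_apply, sum_mul]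
      rw [sum_comm]

theorem IsHermitian.dotProduct_mulVec_le_iSup_eigenvalues_mul (hB : B.IsHermitian)
    (x : ι → ℝ) : x ⬝ᵥ B *ᵥ x ≤ (⨆ i, hB.eigenvalues i) * ∑ j, x j ^ 2 := by
  set b := hB.eigenvectorBasis
  have hBb (i : ι) : inner ℝ (b i) (WithLp.toLp 2 (B *ᵥ x)) =
      hB.eigenvalues i * inner ℝ (b i) (WithLp.toLp 2 x) := by
    rw [EuclideanSpace.inner_eq_star_dotProduct, EuclideanSpace.inner_eq_star_dotProduct,
      star_trivial, ← vecMul_transpose, (isHermitian_iff_isSymm.mp hB).eq, ← dotProduct_mulVec,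
      hB.mulVec_eigenvectorBasis, dotProduct_smul, smul_eq_mul]
  -- Parseval in the eigenbasis: `x ⬝ᵥ B *ᵥ x = ∑ λᵢ ⟪bᵢ, x⟫²` and `∑ xⱼ² = ∑ ⟪bᵢ, x⟫²`
  have hnorm := b.sum_inner_mul_inner (WithLp.toLp 2 x) (WithLp.toLp 2 x)
  have hquad := b.sum_inner_mul_inner (WithLp.toLp 2 x) (WithLp.toLp 2 (B *ᵥ x))
  simp only [hBb, real_inner_comm (b _), EuclideanSpace.inner_toLp_toLp, star_trivial]
    at hnorm hquad
  calc x ⬝ᵥ B *ᵥ x = ∑ i, hB.eigenvalues i * inner ℝ (b i) (WithLp.toLp 2 x) ^ 2 := by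
        rw [dotProduct_comm, ← hquad]
        exact sum_congr rfl fun i _ ↦ by ring
    _ ≤ (⨆ i, hB.eigenvalues i) * ∑ i, inner ℝ (b i) (WithLp.toLp 2 x) ^ 2 :=
        sum_mul_sq_le_iSup_mul_sum_sq _ _
    _ = (⨆ i, hB.eigenvalues i) * ∑ j, x j ^ 2 := by simp only [sq, hnorm, dotProduct]

theorem IsHermitian.apply_self_le_iSup_eigenvalues (hB : B.IsHermitian) (j : ι) :
    B j j ≤ ⨆ i, hB.eigenvalues i := by
  simpa [Pi.single_apply] using hB.dotProduct_mulVec_le_iSup_eigenvalues_mul (Pi.single j 1)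

theorem IsHermitian.eigenvalues_eq_dotProduct_mulVec (hB : B.IsHermitian) (i : ι) :
    hB.eigenvalues i = ⇑(hB.eigenvectorBasis i) ⬝ᵥ B *ᵥ ⇑(hB.eigenvectorBasis i) := by
  simpa using hB.eigenvalues_eq i

theorem IsHermitian.sum_sq_eigenvectorBasis (hB : B.IsHermitian) (i : ι) :
    ∑ j, hB.eigenvectorBasis i j ^ 2 = 1 := by
  have hunit := hB.eigenvectorBasis.orthonormal.1 i
  rw [EuclideanSpace.norm_eq, Real.sqrt_eq_one] at hunit
  simpa using hunit

end Matrix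

theorem largest_eigenvalue_local_support_bound_general
    {m M N : ℕ}
    (A : Fin M → Matrix (Fin N) (Fin N) ℝ)
    (hA : ∀ k, (A k).PosSemidef)
    (S : Fin M → Finset (Fin N)) (hScard : ∀ k, (S k).card ≤ m)
    (hsupp : ∀ k, ∀ i j : Fin N, i ∉ S k ∨ j ∉ S k → A k i j = 0)
    (hsum : (∑ k, A k).IsHermitian) :
    (⨆ j, (∑ k, A k) j j) ≤ (⨆ i, hsum.eigenvalues i) ∧
      (⨆ i, hsum.eigenvalues i) ≤ m * ⨆ j, (∑ k, A k) j j := by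
  rcases isEmpty_or_nonempty (Fin N) with _ | _
  · simp -- both suprema are the junk value `sSup ∅ = 0`
  refine ⟨ciSup_le hsum.apply_self_le_iSup_eigenvalues, ciSup_le fun i ↦ ?_⟩
  set v := ⇑(hsum.eigenvectorBasis i)
  calc hsum.eigenvalues i = v ⬝ᵥ (∑ k, A k) *ᵥ v := hsum.eigenvalues_eq_dotProduct_mulVec i
    _ ≤ m * ∑ j, (∑ k, A k) j j * v j ^ 2 :=
      dotProduct_sum_mulVec_le_of_card_support_le hA hScard hsupp v
    _ ≤ m * ((⨆ j, (∑ k, A k) j j) * ∑ j, v j ^ 2) := by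
      gcongr
      exact sum_mul_sq_le_iSup_mul_sum_sq _ _
    _ = m * ⨆ j, (∑ k, A k) j j := by rw [hsum.sum_sq_eigenvectorBasis i, mul_one]

/-- The largest eigenvalue of a sum of positive semidefinite matrices, each
supported on an index set of size at most `m`, is within the factor `m` of the
largest diagonal entry of the sum. -/
theorem largest_eigenvalue_local_support_bound
    {m M N : ℕ} (hm : 0 < m) (hM : 0 < M) (hN : 0 < N)
    (A : Fin M → Matrix (Fin N) (Fin N) ℝ)
    (hA : ∀ k, (A k).PosSemidef)
    (S : Fin M → Finset (Fin N)) (hScard : ∀ k, (S k).card ≤ m)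
    (hsupp : ∀ k, ∀ i j : Fin N, i ∉ S k ∨ j ∉ S k → A k i j = 0)
    (hsum : (∑ k, A k).IsHermitian) :
    (⨆ j, (∑ k, A k) j j) ≤ (⨆ i, hsum.eigenvalues i) ∧
      (⨆ i, hsum.eigenvalues i) ≤ m * ⨆ j, (∑ k, A k) j j :=
  largest_eigenvalue_local_support_bound_general A hA S hScard hsupp hsum
end

section
/- Let N ≥ 2 be an integer and consider the mesh of [0,1] with nodes x_0 = 0, x_j = 2^{j−N} for j = 1, …, N−1, and x_N = 1 (geometric refinement toward x = 0). For j = 1, …, N let |K_j| = x_j − x_{j−1} and d_{K_j} = sup_{x ∈ [x_{j−1}, x_j]} min(x, 1−x). Then Σ_{j=1}^N d_{K_j} / |K_j| = 2N − 2. -/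
/-!
On `[0, 1/2]` the distance `min t (1 - t)` to the boundary is `t`, so an element `[a, b]` there has
`d_K / |K| = b / (b - a)`. The first element `[0, 2^{1-N}]` gives `1`, the geometric elements
`[2^{j-1-N}, 2^{j-N}]` give `2`, and the last element `[1/2, 1]` gives `(1/2) / (1/2) = 1`;
hence the sum is `1 + 2 (N - 2) + 1`.
-/

open Finset

noncomputable def blNode (N j : ℕ) : ℝ :=
  if j = 0 then 0 else if j = N then 1 else (2 : ℝ) ^ j / 2 ^ N

/-- `d_K` for the element `K = [a, b]`. -/
noncomputable def boundaryDist (a b : ℝ) : ℝ :=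
  sSup ((fun t => min t (1 - t)) '' Set.Icc a b)

/-- `d_K / |K|` for the element `K = [a, b]`. -/
noncomputable def elementWeight (a b : ℝ) : ℝ :=
  boundaryDist a b / (b - a)

section BoundaryDist

variable {a b : ℝ}

theorem boundaryDist_of_le_half (hab : a ≤ b) (hb : b ≤ 1 / 2) : boundaryDist a b = b := by
  have hmin : ∀ t ∈ Set.Icc a b, min t (1 - t) = t := fun t ht => min_eq_left (by linarith [ht.2])
  have hmono : MonotoneOn (fun t => min t (1 - t)) (Set.Icc a b) := fun x hx y hy hxy => by
    simpa only [hmin x hx, hmin y hy] using hxy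
  rw [boundaryDist, hmono.sSup_image_Icc hab, hmin b (Set.right_mem_Icc.mpr hab)]

theorem boundaryDist_of_half_le (hab : a ≤ b) (ha : 1 / 2 ≤ a) : boundaryDist a b = 1 - a := by
  have hmin : ∀ t ∈ Set.Icc a b, min t (1 - t) = 1 - t :=
    fun t ht => min_eq_right (by linarith [ht.1])
  have hanti : AntitoneOn (fun t => min t (1 - t)) (Set.Icc a b) := fun x hx y hy hxy => by
    simp only [hmin x hx, hmin y hy]
    linarith
  rw [boundaryDist, hanti.sSup_image_Icc hab, hmin a (Set.left_mem_Icc.mpr hab)]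

theorem elementWeight_of_le_half (hab : a ≤ b) (hb : b ≤ 1 / 2) :
    elementWeight a b = b / (b - a) := by
  rw [elementWeight, boundaryDist_of_le_half hab hb]

theorem elementWeight_of_half_le (hab : a ≤ b) (ha : 1 / 2 ≤ a) :
    elementWeight a b = (1 - a) / (b - a) := by
  rw [elementWeight, boundaryDist_of_half_le hab ha]

end BoundaryDist

section BoundaryLayerMesh

variable {N j : ℕ}

theorem blNode_zero (N : ℕ) : blNode N 0 = 0 := if_pos rfl

theorem blNode_self (hN : N ≠ 0) : blNode N N = 1 := by
  simp [blNode, hN]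

theorem blNode_of_pos_of_lt (hj : 0 < j) (hjN : j < N) : blNode N j = 2 ^ j / 2 ^ N := by
  simp [blNode, hj.ne', hjN.ne]

theorem blNode_le_half (hjN : j < N) : blNode N j ≤ 1 / 2 := by
  rcases Nat.eq_zero_or_pos j with rfl | hj
  · rw [blNode_zero]
    norm_num
  rw [blNode_of_pos_of_lt hj hjN, div_le_div_iff₀ (by positivity) two_pos, ← pow_succ, one_mul]
  exact pow_le_pow_right₀ (one_le_two (α := ℝ)) hjN

theorem blNode_pred_self (hN : 2 ≤ N) : blNode N (N - 1) = 1 / 2 := by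
  obtain ⟨n, rfl⟩ : ∃ n, N = n + 1 := ⟨N - 1, by omega⟩
  rw [Nat.add_sub_cancel, blNode_of_pos_of_lt (by omega) (by omega), pow_succ]
  field_simp

theorem elementWeight_blNode_one (hN : 2 ≤ N) : elementWeight (blNode N 0) (blNode N 1) = 1 := by
  have hpos : 0 < blNode N 1 := by
    rw [blNode_of_pos_of_lt one_pos (by omega)]
    positivity
  rw [blNode_zero, elementWeight_of_le_half hpos.le (blNode_le_half (by omega)), sub_zero,
    div_self hpos.ne']

theorem elementWeight_blNode_self (hN : 2 ≤ N) :
    elementWeight (blNode N (N - 1)) (blNode N N) = 1 := by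
  rw [blNode_pred_self hN, blNode_self (by omega), elementWeight_of_half_le (by norm_num) le_rfl]
  norm_num

theorem elementWeight_blNode_of_lt (hj : 1 < j) (hjN : j < N) :
    elementWeight (blNode N (j - 1)) (blNode N j) = 2 := by
  obtain ⟨i, rfl⟩ : ∃ i, j = i + 1 := ⟨j - 1, by omega⟩
  have hprev : blNode N i = 2 ^ i / 2 ^ N := blNode_of_pos_of_lt (by omega) (by omega)
  have hnode : blNode N (i + 1) = 2 * blNode N i := by
    rw [hprev, blNode_of_pos_of_lt (by omega) hjN, pow_succ]
    ring
  have hpos : 0 < blNode N i := by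
    rw [hprev]
    positivity
  rw [Nat.add_sub_cancel, elementWeight_of_le_half (by linarith) (blNode_le_half hjN), hnode]
  field_simp
  ring

end BoundaryLayerMesh

/-- For the boundary-layer mesh, the sum `Σ_j d_{K_j}/|K_j|` equals `2N - 2`,
where `|K_j| = x_j - x_{j-1}` and `d_{K_j} = sup_{x ∈ [x_{j-1},x_j]} min(x,1-x)`. -/
theorem boundary_layer_mesh_weighted_sum (N : ℕ) (hN : 2 ≤ N) :
    ∑ j ∈ Finset.Icc 1 N,
      (sSup ((fun t => min t (1 - t)) '' Set.Icc (blNode N (j - 1)) (blNode N j))) /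
        (blNode N j - blNode N (j - 1)) = 2 * N - 2 := by
  change ∑ j ∈ Icc 1 N, elementWeight (blNode N (j - 1)) (blNode N j) = _
  obtain ⟨n, rfl⟩ : ∃ n, N = n + 1 + 1 := ⟨N - 2, by omega⟩
  rw [sum_Icc_succ_top (by omega), ← Ico_add_one_right_eq_Icc, sum_eq_sum_Ico_succ_bot (by omega),
    Nat.sub_self, elementWeight_blNode_one hN, elementWeight_blNode_self hN,
    sum_congr rfl fun j hj => elementWeight_blNode_of_lt (by grind) (by grind),
    sum_const, Nat.card_Ico]
  push_cast
  ring
end
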